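/- Let {f̂(n)}_{n≥0} ∈ GBV and {f̂(n) + f̂(−n)}_{n≥1} ∈ GBV. Then there exists C > 0 such that for all n ≥ 1 and all x ∈ [0, π]: |Σ_{k=1}^{n} f̂(n+k) sin kx| ≤ C·max_{1≤k≤n} k·(|f̂(n+k)| + |f̂(−n−k)|). -/

import Mathlib

/-!
Let `T` be the maximum on the right, so `k ‖f̂(n + k)‖ ≤ T`. Split the sum at `N = ⌈π / x⌉`.
Since `|sin kx| ≤ kx`, the terms with `k < N` contribute at most `N x T ≤ 2πT`. For `k ≥ N`,
Abel summation against the sine partial sums, which are at most `π / x ≤ N`, leaves the variation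
of `f̂` on `[n + N, 2n]` and the last coefficient. The GBV condition at `m = n + N` bounds that
variation by `M` times the maximum of `‖f̂(j)‖` over `n + N ≤ j < n + N + N₀`, and each of these is
`≤ T / N`. When `n x` is small the first estimate already covers the whole sum.
-/

open Filter Complex Real

noncomputable section

/-- `K(θ) = {z ∈ ℂ : |arg z| ≤ θ}`. -/
def Kset (θ : ℝ) : Set ℂ := {z : ℂ | |Complex.arg z| ≤ θ}

/-- The class GBV: `c_n ∈ K(θ₁)` for some `θ₁ ∈ [0, π/2)` and all `n ≥ 1`, and
`Σ_{n=m}^{2m} |Δc_n| ≤ M · max_{m ≤ n < m+N₀} |c_n|` for all `m ≥ 1`. -/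
def GBV (c : ℕ → ℂ) : Prop :=
  (∃ θ₁ : ℝ, 0 ≤ θ₁ ∧ θ₁ < Real.pi / 2 ∧ ∀ n, 1 ≤ n → c n ∈ Kset θ₁) ∧
  (∃ N₀ : ℕ, 1 ≤ N₀ ∧ ∃ M : ℝ, 0 < M ∧ ∀ m, 1 ≤ m →
    (∑ n ∈ Finset.Icc m (2 * m), ‖c n - c (n + 1)‖) ≤
      M * ⨆ n ∈ Finset.Ico m (m + N₀), ‖c n‖)

open Finset

lemma le_biSup_finset {ι : Type*} (s : Finset ι) (f : ι → ℝ) {k : ι} (hk : k ∈ s) :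
    f k ≤ ⨆ i ∈ s, f i :=
  le_ciSup₂ (f := fun i (_ : i ∈ s) => f i)
    ((s.finite_toSet.image f).subset
      (by rintro _ ⟨_, ⟨i, rfl⟩, ⟨hi, rfl⟩⟩; exact ⟨i, hi, rfl⟩)).bddAbove
    k hk

lemma two_mul_sin_half_mul_sum_range_sin (x q : ℝ) (L : ℕ) :
    2 * Real.sin (x / 2) * ∑ i ∈ range L, Real.sin ((q + i) * x) =
      Real.cos ((q - 1 / 2) * x) - Real.cos ((q + L - 1 / 2) * x) := by
  induction L with
  | zero => simp
  | succ L ih =>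
    have h := Real.cos_sub_cos ((q + L - 1 / 2) * x) ((q + L + 1 / 2) * x)
    rw [show ((q + L - 1 / 2) * x + (q + L + 1 / 2) * x) / 2 = (q + L) * x by ring,
      show ((q + L - 1 / 2) * x - (q + L + 1 / 2) * x) / 2 = -(x / 2) by ring,
      Real.sin_neg] at h
    rw [sum_range_succ, mul_add, ih,
      show q + ((L + 1 : ℕ) : ℝ) - 1 / 2 = q + L + 1 / 2 by push_cast; ring]
    linear_combination -h

lemma abs_sum_range_sin_le {x : ℝ} (hx₀ : 0 < x) (hxπ : x ≤ π) (q : ℝ) (L : ℕ) :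
    |∑ i ∈ range L, Real.sin ((q + i) * x)| ≤ π / x := by
  set S := ∑ i ∈ range L, Real.sin ((q + i) * x)
  have jordan : x / π ≤ Real.sin (x / 2) := by
    have := Real.mul_le_sin (x := x / 2) (by linarith) (by linarith)
    rwa [show 2 / π * (x / 2) = x / π by ring] at this
  have hS : |S| * Real.sin (x / 2) ≤ 1 := by
    have h := two_mul_sin_half_mul_sum_range_sin x q L
    have hcos := abs_sub (Real.cos ((q - 1 / 2) * x)) (Real.cos ((q + L - 1 / 2) * x))
    have := Real.abs_cos_le_one ((q - 1 / 2) * x)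
    have := Real.abs_cos_le_one ((q + L - 1 / 2) * x)
    have hsin : 0 ≤ Real.sin (x / 2) := by linarith [div_pos hx₀ pi_pos]
    rw [← h, abs_mul, abs_mul, abs_two, abs_of_nonneg hsin] at hcos
    linarith
  rw [le_div_iff₀ hx₀]
  calc |S| * x = π * (|S| * (x / π)) := by field_simp
    _ ≤ π * 1 := by gcongr; exact (mul_le_mul_of_nonneg_left jordan (abs_nonneg S)).trans hS
    _ = π := mul_one π

lemma sum_range_succ_mul_eq {R : Type*} [Ring R] (a b : ℕ → R) (L : ℕ) :
    ∑ i ∈ range (L + 1), a i * b i =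
      a L * ∑ i ∈ range (L + 1), b i
        - ∑ i ∈ range L, (a (i + 1) - a i) * ∑ j ∈ range (i + 1), b j := by
  simpa using sum_range_by_parts a b (L + 1)

lemma norm_sum_range_succ_mul_le {R : Type*} [SeminormedRing R] (a b : ℕ → R) {D : ℝ}
    (hb : ∀ m, ‖∑ i ∈ range m, b i‖ ≤ D) (L : ℕ) :
    ‖∑ i ∈ range (L + 1), a i * b i‖ ≤
      D * (∑ i ∈ range L, ‖a i - a (i + 1)‖ + ‖a L‖) := by
  rw [sum_range_succ_mul_eq]
  calc _ ≤ ‖a L‖ * D + ∑ i ∈ range L, ‖a i - a (i + 1)‖ * D := by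
        refine (norm_sub_le _ _).trans (add_le_add ?_ (norm_sum_le_of_le _ fun i _ => ?_))
        · exact (norm_mul_le _ _).trans (by gcongr; exact hb _)
        · rw [norm_sub_rev (a i)]
          exact (norm_mul_le _ _).trans (by gcongr; exact hb _)
    _ = D * (∑ i ∈ range L, ‖a i - a (i + 1)‖ + ‖a L‖) := by
        rw [← sum_mul]; ring

lemma norm_sum_Icc_mul_sin_le (a : ℕ → ℂ) {x : ℝ} (hx₀ : 0 < x) (hxπ : x ≤ π) (q r : ℕ) :
    ‖∑ k ∈ Icc q r, a k * (Real.sin (k * x) : ℂ)‖ ≤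
      π / x * (∑ k ∈ Ico q r, ‖a k - a (k + 1)‖ + ‖a r‖) := by
  rcases le_or_gt q r with hqr | hrq
  · obtain ⟨L, rfl⟩ := Nat.exists_eq_add_of_le hqr
    have hb (m : ℕ) : ‖∑ i ∈ range m, (Real.sin ((q + i) * x) : ℂ)‖ ≤ π / x := by
      rw [← Complex.ofReal_sum, Complex.norm_real, Real.norm_eq_abs]
      exact abs_sum_range_sin_le hx₀ hxπ q m
    have := norm_sum_range_succ_mul_le (fun i => a (q + i)) _ hb L
    rw [← Ico_add_one_right_eq_Icc, sum_Ico_eq_sum_range, sum_Ico_eq_sum_range,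
      show q + L + 1 - q = L + 1 by omega, Nat.add_sub_cancel_left]
    simpa [add_assoc] using this
  · rw [Icc_eq_empty_of_lt hrq, sum_empty, norm_zero]
    have := pi_pos
    positivity

lemma norm_sum_mul_sin_le_card (s : Finset ℕ) (a : ℕ → ℂ) {x T : ℝ} (hx : 0 ≤ x)
    (h : ∀ k ∈ s, k * ‖a k‖ ≤ T) :
    ‖∑ k ∈ s, a k * (Real.sin (k * x) : ℂ)‖ ≤ #s * x * T := by
  calc _ ≤ ∑ _k ∈ s, x * T := norm_sum_le_of_le s fun k hk => ?_
    _ = #s * x * T := by rw [sum_const, nsmul_eq_mul, mul_assoc]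
  rw [norm_mul, Complex.norm_real, Real.norm_eq_abs]
  calc ‖a k‖ * |Real.sin (k * x)| ≤ ‖a k‖ * (k * x) := by
        gcongr
        exact Real.abs_sin_le_abs.trans (abs_of_nonneg (by positivity)).le
    _ = x * (k * ‖a k‖) := by ring
    _ ≤ x * T := by gcongr; exact h k hk

lemma sum_Ico_norm_sub_le_of_variation (c : ℕ → ℂ) {N₀ N n : ℕ} {M B : ℝ} (hM : 0 ≤ M)
    (hvar : ∑ j ∈ Icc (n + N) (2 * (n + N)), ‖c j - c (j + 1)‖ ≤
      M * ⨆ j ∈ Ico (n + N) (n + N + N₀), ‖c j‖)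
    (hNn : N + N₀ ≤ n) (hc : ∀ k ∈ Icc N n, ‖c (n + k)‖ ≤ B) :
    ∑ k ∈ Ico N n, ‖c (n + k) - c (n + k + 1)‖ ≤ M * B := by
  have hB : 0 ≤ B := (norm_nonneg _).trans (hc N (mem_Icc.2 ⟨le_rfl, by omega⟩))
  have hwin : ⨆ j ∈ Ico (n + N) (n + N + N₀), ‖c j‖ ≤ B := by
    refine Real.iSup_le (fun j => Real.iSup_le (fun hj => ?_) hB) hB
    obtain ⟨hj₁, hj₂⟩ := mem_Ico.1 hj
    simpa [show n + (j - n) = j by omega] using hc (j - n) (mem_Icc.2 ⟨by omega, by omega⟩)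
  calc ∑ k ∈ Ico N n, ‖c (n + k) - c (n + k + 1)‖
      = ∑ j ∈ Ico (N + n) (n + n), ‖c j - c (j + 1)‖ :=
        sum_Ico_add (fun j => ‖c j - c (j + 1)‖) _ _ _
    _ ≤ ∑ j ∈ Icc (n + N) (2 * (n + N)), ‖c j - c (j + 1)‖ := by
        refine sum_le_sum_of_subset_of_nonneg (fun j hj => ?_) fun _ _ _ => norm_nonneg _
        rw [mem_Ico] at hj
        rw [mem_Icc]
        omega
    _ ≤ M * B := hvar.trans (by gcongr)

theorem norm_sum_mul_sin_le_of_variation (c : ℕ → ℂ) {N₀ n : ℕ} {M T x : ℝ} (hM : 0 ≤ M)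
    (hvar : ∀ m, 1 ≤ m → ∑ j ∈ Icc m (2 * m), ‖c j - c (j + 1)‖ ≤
      M * ⨆ j ∈ Ico m (m + N₀), ‖c j‖)
    (hT₀ : 0 ≤ T) (hT : ∀ k ∈ Icc 1 n, k * ‖c (n + k)‖ ≤ T) (hx : x ∈ Set.Icc 0 π) :
    ‖∑ k ∈ Icc 1 n, c (n + k) * (Real.sin (k * x) : ℂ)‖ ≤ ((2 + N₀) * π + M + 1) * T := by
  obtain ⟨hx₀, hxπ⟩ := hx
  have hπ := pi_pos
  by_cases hsmall : n * x ≤ (2 + N₀) * π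
  · calc _ ≤ #(Icc 1 n) * x * T := norm_sum_mul_sin_le_card _ _ hx₀ hT
      _ = n * x * T := by rw [Nat.card_Icc, Nat.add_sub_cancel]
      _ ≤ (2 + N₀) * π * T := by gcongr
      _ ≤ ((2 + N₀) * π + M + 1) * T := by gcongr; linarith
  rw [not_le] at hsmall
  have hxpos : 0 < x := hx₀.lt_of_ne <| by
    rintro rfl
    rw [mul_zero] at hsmall
    exact (not_lt.2 (by positivity)) hsmall
  set N := ⌈π / x⌉₊ with hNdef
  have hπN : π / x ≤ N := Nat.le_ceil _
  have hNx : N * x < π + x := by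
    have := Nat.ceil_lt_add_one (div_pos hπ hxpos).le
    rw [← hNdef] at this
    calc (N : ℝ) * x < (π / x + 1) * x := by gcongr
      _ = π + x := by field_simp
  have hN : 0 < N := Nat.ceil_pos.2 (div_pos hπ hxpos)
  have hNn : N + N₀ ≤ n := by
    have : ((N + N₀ : ℕ) : ℝ) * x < n * x := by
      push_cast
      nlinarith [(Nat.cast_nonneg N₀ : (0 : ℝ) ≤ N₀)]
    exact_mod_cast (lt_of_mul_lt_mul_right this hx₀).le
  have hc : ∀ k ∈ Icc N n, ‖c (n + k)‖ ≤ T / N := by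
    intro k hk
    obtain ⟨hNk, hkn⟩ := mem_Icc.1 hk
    rw [le_div_iff₀ (by exact_mod_cast hN)]
    calc ‖c (n + k)‖ * N ≤ k * ‖c (n + k)‖ := by
          rw [mul_comm]; gcongr
      _ ≤ T := hT k (mem_Icc.2 ⟨by omega, hkn⟩)
  have hhead : ‖∑ k ∈ Ico 1 N, c (n + k) * (Real.sin (k * x) : ℂ)‖ ≤ 2 * π * T :=
    calc _ ≤ #(Ico 1 N) * x * T :=
          norm_sum_mul_sin_le_card _ _ hx₀ fun k hk => hT k (by simp at hk ⊢; omega)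
      _ ≤ N * x * T := by gcongr; simp
      _ ≤ 2 * π * T := by gcongr ?_ * T; linarith
  have htail : ‖∑ k ∈ Icc N n, c (n + k) * (Real.sin (k * x) : ℂ)‖ ≤ (M + 1) * T :=
    calc _ ≤ π / x * (∑ k ∈ Ico N n, ‖c (n + k) - c (n + k + 1)‖ + ‖c (n + n)‖) :=
          norm_sum_Icc_mul_sin_le (fun k => c (n + k)) hxpos hxπ N n
      _ ≤ N * (M * (T / N) + T / N) := by
          gcongr
          · exact sum_Ico_norm_sub_le_of_variation c hM (hvar _ (by omega)) hNn hc
          · exact hc n (mem_Icc.2 ⟨by omega, le_rfl⟩)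
      _ = (M + 1) * T := by field_simp
  rw [← Ico_add_one_right_eq_Icc, ← sum_Ico_consecutive _ hN (by omega : N ≤ n + 1),
    Ico_add_one_right_eq_Icc]
  calc _ ≤ 2 * π * T + (M + 1) * T := (norm_add_le _ _).trans (add_le_add hhead htail)
    _ ≤ ((2 + N₀) * π + M + 1) * T := by
        rw [← add_mul]
        gcongr ?_ * T
        nlinarith [(Nat.cast_nonneg N₀ : (0 : ℝ) ≤ N₀)]

theorem stmt_8 (fhat : ℤ → ℂ)
    (h1 : GBV (fun n : ℕ => fhat (n : ℤ))) :
    ∃ C : ℝ, 0 < C ∧ ∀ n : ℕ, 1 ≤ n → ∀ x ∈ Set.Icc (0 : ℝ) Real.pi,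
      ‖∑ k ∈ Finset.Icc 1 n,
          fhat ((n : ℤ) + (k : ℤ)) * (Real.sin (k * x) : ℂ)‖ ≤
        C * ⨆ k ∈ Finset.Icc 1 n,
          (k : ℝ) * (‖fhat ((n : ℤ) + (k : ℤ))‖ +
            ‖fhat (-(n : ℤ) - (k : ℤ))‖) := by
  obtain ⟨-, N₀, -, M, hM, hvar⟩ := h1
  refine ⟨(2 + N₀) * π + M + 1, by positivity, fun n _ x hx => ?_⟩
  set T := ⨆ k ∈ Icc 1 n,
    (k : ℝ) * (‖fhat ((n : ℤ) + (k : ℤ))‖ + ‖fhat (-(n : ℤ) - (k : ℤ))‖)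
  have hT₀ : 0 ≤ T := Real.iSup_nonneg fun k => Real.iSup_nonneg fun _ => by positivity
  have hT (k : ℕ) (hk : k ∈ Icc 1 n) : k * ‖fhat ((n + k : ℕ) : ℤ)‖ ≤ T :=
    calc _ ≤ k * (‖fhat ((n : ℤ) + (k : ℤ))‖ + ‖fhat (-(n : ℤ) - (k : ℤ))‖) := by
          push_cast; gcongr; exact le_add_of_nonneg_right (norm_nonneg _)
      _ ≤ T := le_biSup_finset (Icc 1 n)
          (fun i : ℕ => (i : ℝ) * (‖fhat ((n : ℤ) + (i : ℤ))‖ + ‖fhat (-(n : ℤ) - (i : ℤ))‖)) hk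
  simpa using norm_sum_mul_sin_le_of_variation (fun m : ℕ => fhat m) hM.le hvar hT₀ hT hx
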